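/- Let ρ be a permutation of ℕ whose finite cycle lengths are unbounded (or which has an infinite cycle with bounded finite cycles). Then a permutation γ of ℕ lies in the closure of the conjugacy class of ρ in Sym(ℕ) if and only if for every finite n ≥ 1, the number of n-cycles of γ is at most the number of n-cycles of ρ. -/

import Mathlib

/-- The cycle (orbit) of `x` under the permutation `ρ`. -/
def orbitOf (ρ : Equiv.Perm ℕ) (x : ℕ) : Set ℕ := {y | ∃ k : ℤ, (ρ ^ k) x = y}

/-- The set of cycles of `ρ`. -/
def cyclesOf (ρ : Equiv.Perm ℕ) : Set (Set ℕ) := Set.range (orbitOf ρ)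

/-- The number (in `ℕ ∪ {∞}`) of cycles of `ρ` of length `ι`. -/
noncomputable def cycleCount (ρ : Equiv.Perm ℕ) (ι : ℕ∞) : ℕ∞ :=
  {s | s ∈ cyclesOf ρ ∧ s.encard = ι}.encard

/-- The pointwise convergence topology on `Sym(ℕ)`. -/
instance : TopologicalSpace (Equiv.Perm ℕ) :=
  TopologicalSpace.induced (fun g : Equiv.Perm ℕ => (⇑g, ⇑g.symm)) inferInstance


/-!
The closure condition is local: `γ` lies in the closure of the conjugacy class of `ρ` iff every
finite piece of `γ` is matched by some conjugate `σ ρ σ⁻¹`. A finite `n`-cycle of `γ` survives in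
every permutation close enough to `γ`, and conjugation preserves the number of `n`-cycles, which
gives the necessity of `f_γ(n) ≤ f_ρ(n)`.

Conversely, cover a finite set `E` by initial segments `b, γ b, …, γ^(K-1) b` of finitely many
`γ`-cycles. A short cycle (of length `< K`) is sent to a `ρ`-cycle of the same length, distinct
cycles to distinct cycles, which the inequalities on cycle counts allow; each long segment is sent
to its own stretch of one `ρ`-cycle longer than all of them together, which exists since the cycle
lengths of `ρ` are unbounded. This partial matching is injective and extends to a permutation
`σ` with `σ ρ σ⁻¹ = γ` on `E`.
-/

open Equiv Equiv.Perm Function Set Filter Topology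

section Cycles

variable {π : Perm ℕ} {x y : ℕ}

theorem orbitOf_eq_orbitOf_iff : orbitOf π x = orbitOf π y ↔ π.SameCycle x y :=
  ⟨fun h => (h ▸ SameCycle.refl π y : y ∈ orbitOf π x),
    fun h => Set.ext fun _ => ⟨h.symm.trans, h.trans⟩⟩

theorem orbitOf_eq_of_pow_apply_eq {a b : ℕ} (h : (π ^ a) x = (π ^ b) y) :
    orbitOf π x = orbitOf π y :=
  orbitOf_eq_orbitOf_iff.mpr <| (sameCycle_pow_right.mpr (SameCycle.refl π x)).trans
    (h ▸ (sameCycle_pow_right.mpr (SameCycle.refl π y)).symm)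

theorem orbitOf_zpow_apply (π : Perm ℕ) (k : ℤ) (x : ℕ) :
    orbitOf π ((π ^ k) x) = orbitOf π x :=
  (orbitOf_eq_orbitOf_iff.mpr (sameCycle_zpow_right.mpr (SameCycle.refl π x))).symm

theorem orbitOf_eq_orbit_zpowers (π : Perm ℕ) (x : ℕ) :
    orbitOf π x = MulAction.orbit (Subgroup.zpowers π) x := by
  ext y
  simp only [MulAction.mem_orbit_iff, Subtype.exists, Subgroup.mem_zpowers_iff]
  exact ⟨fun ⟨k, hk⟩ => ⟨_, ⟨k, rfl⟩, hk⟩, fun ⟨_, ⟨k, rfl⟩, hk⟩ => ⟨k, hk⟩⟩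

theorem encard_orbitOf (π : Perm ℕ) (x : ℕ) :
    (orbitOf π x).encard =
      if minimalPeriod π x = 0 then (⊤ : ℕ∞) else (minimalPeriod π x : ℕ∞) := by
  rw [orbitOf_eq_orbit_zpowers, Set.encard, ENat.card_congr (MulAction.orbitZPowersEquiv π x)]
  change ENat.card (ZMod (minimalPeriod π x)) = _
  cases minimalPeriod π x with
  | zero => exact ENat.card_eq_top_of_infinite (α := ℤ)
  | succ n => simp

theorem zpow_apply_eq_zpow_apply_iff (π : Perm ℕ) (x : ℕ) (a b : ℤ) :
    (π ^ a) x = (π ^ b) x ↔ (a : ZMod (minimalPeriod π x)) = b := by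
  have hb : (π ^ b) x = (π ^ a) ((π ^ (b - a)) x) := by
    rw [← Perm.mul_apply, ← zpow_add, add_sub_cancel]
  rw [hb, (π ^ a).injective.eq_iff, eq_comm, ZMod.intCast_eq_intCast_iff_dvd_sub]
  exact MulAction.zpow_smul_eq_iff_minimalPeriod_dvd (a := π) (b := x)

theorem pow_apply_eq_pow_apply_iff (π : Perm ℕ) (x : ℕ) (a b : ℕ) :
    (π ^ a) x = (π ^ b) x ↔ a % minimalPeriod π x = b % minimalPeriod π x := by
  have h := zpow_apply_eq_zpow_apply_iff π x a b
  simp only [zpow_natCast, Int.cast_natCast] at h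
  rw [h, ZMod.natCast_eq_natCast_iff']

theorem minimalPeriod_eq_of_encard_orbitOf_eq {ρ : Perm ℕ}
    (h : (orbitOf π x).encard = (orbitOf ρ y).encard) :
    minimalPeriod π x = minimalPeriod ρ y := by
  rw [encard_orbitOf, encard_orbitOf] at h
  split_ifs at h with hπ hρ hρ
  · rw [hπ, hρ]
  all_goals simp_all

theorem pow_apply_eq_pow_apply_iff_of_encard_eq {ρ : Perm ℕ}
    (h : (orbitOf π x).encard = (orbitOf ρ y).encard) (a b : ℕ) :
    (π ^ a) x = (π ^ b) x ↔ (ρ ^ a) y = (ρ ^ b) y := by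
  rw [pow_apply_eq_pow_apply_iff, pow_apply_eq_pow_apply_iff,
    minimalPeriod_eq_of_encard_orbitOf_eq h]

theorem injOn_pow_apply_Iio_iff (N : ℕ) :
    InjOn (fun k : ℕ => (π ^ k) x) (Iio N) ↔ (N : ℕ∞) ≤ (orbitOf π x).encard := by
  simp only [InjOn, mem_Iio, pow_apply_eq_pow_apply_iff, encard_orbitOf]
  split_ifs with hp
  · simp [hp]
  · rw [Nat.cast_le]
    refine ⟨fun h => ?_, fun h a ha b hb hab => ?_⟩
    · by_contra! hN
      exact hp (h (by omega) hN (by simp)).symm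
    · rwa [Nat.mod_eq_of_lt (ha.trans_le h), Nat.mod_eq_of_lt (hb.trans_le h)] at hab

theorem pow_add_mul_apply_eq_iff {K N : ℕ} (hx : ((K * N : ℕ) : ℕ∞) ≤ (orbitOf π x).encard)
    {k k' b b' : ℕ} (hk : k < K) (hk' : k' < K) (hb : b < N) (hb' : b' < N) :
    (π ^ (k + K * b)) x = (π ^ (k' + K * b')) x ↔ k = k' ∧ b = b' := by
  have hlt : ∀ {i c : ℕ}, i < K → c < N → i + K * c < K * N := fun {i c} hi hc =>
    calc i + K * c < K * (c + 1) := by rw [mul_add_one]; omega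
      _ ≤ K * N := Nat.mul_le_mul_left K hc
  rw [((injOn_pow_apply_Iio_iff _).mpr hx).eq_iff (hlt hk hb) (hlt hk' hb')]
  refine ⟨fun h => ?_, fun ⟨rfl, rfl⟩ => rfl⟩
  have hmod := congrArg (· % K) h
  have hdiv := congrArg (· / K) h
  simp only [Nat.add_mul_mod_self_left, Nat.mod_eq_of_lt hk, Nat.mod_eq_of_lt hk'] at hmod
  simp only [Nat.add_mul_div_left _ _ (by omega : 0 < K), Nat.div_eq_of_lt hk,
    Nat.div_eq_of_lt hk', zero_add] at hdiv
  exact ⟨hmod, hdiv⟩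

end Cycles

theorem orbitOf_conj (σ π : Perm ℕ) (y : ℕ) :
    orbitOf (σ * π * σ⁻¹) y = σ '' orbitOf π (σ⁻¹ y) := by
  ext z
  rw [σ.image_eq_preimage_symm]
  exact sameCycle_conj

theorem cyclesOf_conj (σ π : Perm ℕ) :
    cyclesOf (σ * π * σ⁻¹) = image σ '' cyclesOf π := by
  rw [cyclesOf, cyclesOf, ← range_comp, funext (orbitOf_conj σ π)]
  exact (σ⁻¹).surjective.range_comp (image σ ∘ orbitOf π)

theorem cycleCount_conj (σ π : Perm ℕ) (ι : ℕ∞) :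
    cycleCount (σ * π * σ⁻¹) ι = cycleCount π ι := by
  have h : {s | s ∈ cyclesOf (σ * π * σ⁻¹) ∧ s.encard = ι} =
      image σ '' {s | s ∈ cyclesOf π ∧ s.encard = ι} := by
    ext s
    simp only [cyclesOf_conj, mem_image, mem_ofPred_eq]
    constructor
    · rintro ⟨⟨c, hc, rfl⟩, hs⟩
      exact ⟨c, ⟨hc, σ.injective.encard_image c ▸ hs⟩, rfl⟩
    · rintro ⟨c, ⟨hc, hs⟩, rfl⟩
      exact ⟨⟨c, hc, rfl⟩, (σ.injective.encard_image c).trans hs⟩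
  rw [cycleCount, h, (image_injective.mpr σ.injective).encard_image, cycleCount]

theorem IsConj.cycleCount_eq {π g : Perm ℕ} (h : IsConj π g) (ι : ℕ∞) :
    cycleCount g ι = cycleCount π ι := by
  obtain ⟨σ, rfl⟩ := isConj_iff.mp h
  exact cycleCount_conj σ π ι

theorem hasBasis_nhds_pi_of_discrete {ι α : Type*} [TopologicalSpace α] [DiscreteTopology α]
    (f : ι → α) : (𝓝 f).HasBasis Set.Finite (fun I => {g | ∀ i ∈ I, g i = f i}) := by
  rw [nhds_pi]
  simp only [nhds_discrete]
  exact hasBasis_pi_pure f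

theorem hasBasis_nhds_perm (γ : Perm ℕ) :
    (𝓝 γ).HasBasis (fun IJ : Set ℕ × Set ℕ => IJ.1.Finite ∧ IJ.2.Finite)
      (fun IJ => {g | (∀ i ∈ IJ.1, g i = γ i) ∧ ∀ j ∈ IJ.2, g.symm j = γ.symm j}) := by
  rw [nhds_induced, nhds_prod_eq]
  exact ((hasBasis_nhds_pi_of_discrete γ).prod (hasBasis_nhds_pi_of_discrete γ.symm)).comap _

theorem mem_closure_iff_forall_finite_eqOn {S : Set (Perm ℕ)} {γ : Perm ℕ} :
    γ ∈ closure S ↔ ∀ F : Set ℕ, F.Finite → ∃ g ∈ S, EqOn g γ F := by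
  rw [mem_closure_iff_nhds_basis (hasBasis_nhds_perm γ)]
  refine ⟨fun h F hF => ?_, fun h IJ hIJ => ?_⟩
  · obtain ⟨g, hgS, hg, -⟩ := h (F, ∅) ⟨hF, finite_empty⟩
    exact ⟨g, hgS, hg⟩
  · -- agreeing with `γ` at `γ⁻¹ j` forces `g⁻¹ j = γ⁻¹ j`
    obtain ⟨g, hgS, hg⟩ := h (IJ.1 ∪ γ.symm '' IJ.2) (hIJ.1.union (hIJ.2.image _))
    refine ⟨g, hgS, fun i hi => hg (Or.inl hi), fun j hj => ?_⟩
    rw [symm_apply_eq, hg (Or.inr (mem_image_of_mem _ hj)), apply_symm_apply]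

theorem zpow_apply_eq_of_eqOn {g γ : Perm ℕ} {x : ℕ} (h : EqOn g γ (orbitOf γ x)) (k : ℤ) :
    (g ^ k) x = (γ ^ k) x := by
  have hpow : ∀ n : ℕ, ∀ y ∈ orbitOf γ x, (g ^ n) y = (γ ^ n) y := by
    intro n
    induction n with
    | zero => simp
    | succ n ih =>
      intro y hy
      rw [pow_succ', mul_apply, ih y hy, pow_succ', mul_apply,
        h (sameCycle_pow_right.mpr hy)]
  obtain ⟨n, rfl | rfl⟩ := Int.eq_nat_or_neg k
  · exact hpow n x (SameCycle.refl γ x)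
  · have hy : (γ ^ (-n : ℤ)) x ∈ orbitOf γ x := sameCycle_zpow_right.mpr (SameCycle.refl γ x)
    rw [zpow_neg, zpow_natCast, Perm.inv_eq_iff_eq, hpow n _ hy, ← zpow_natCast,
      ← Perm.mul_apply, ← zpow_add, add_neg_cancel, zpow_zero, one_apply]

theorem orbitOf_eq_of_eqOn {g γ : Perm ℕ} {x : ℕ} (h : EqOn g γ (orbitOf γ x)) :
    orbitOf g x = orbitOf γ x :=
  Set.ext fun _ => exists_congr fun k => by rw [zpow_apply_eq_of_eqOn h k]

theorem cycleCount_le_of_mem_closure {ρ γ : Perm ℕ} (hγ : γ ∈ closure {g | IsConj ρ g})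
    (n : ℕ) : cycleCount γ n ≤ cycleCount ρ n := by
  refine ENat.forall_natCast_le_iff_le.mp fun m hm => ?_
  obtain ⟨T, hTsub, hTcard⟩ := exists_subset_encard_eq hm
  have hUfin : (⋃₀ T).Finite :=
    (finite_of_encard_eq_coe hTcard).sUnion fun c hc => finite_of_encard_eq_coe (hTsub hc).2
  obtain ⟨g, hg, hgγ⟩ := mem_closure_iff_forall_finite_eqOn.mp hγ _ hUfin
  have hT : T ⊆ {s | s ∈ cyclesOf g ∧ s.encard = n} := by
    intro c hc
    obtain ⟨⟨x, rfl⟩, hx⟩ := hTsub hc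
    exact ⟨⟨x, orbitOf_eq_of_eqOn fun y hy => hgγ ⟨_, hc, hy⟩⟩, hx⟩
  calc (m : ℕ∞) = T.encard := hTcard.symm
    _ ≤ cycleCount g n := encard_le_encard hT
    _ = cycleCount ρ n := hg.cycleCount_eq n

theorem exists_perm_apply_eq_of_iff {α ι : Type*} [Infinite α] {s : Set ι} (hs : s.Finite)
    {p q : ι → α} (h : ∀ i ∈ s, ∀ j ∈ s, q i = q j ↔ p i = p j) :
    ∃ σ : Perm α, ∀ i ∈ s, σ (q i) = p i := by
  choose idx hidx hqidx using fun y : q '' s => y.2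
  let f : q '' s ↪ α := ⟨fun y => p (idx y), fun y y' hyy' => Subtype.ext <| by
    rw [← hqidx y, ← hqidx y']
    exact (h _ (hidx y) _ (hidx y')).mpr hyy'⟩
  have hlt : Cardinal.mk (q '' s) < Cardinal.mk α :=
    (hs.image q).lt_aleph0.trans_le (Cardinal.aleph0_le_mk α)
  obtain ⟨σ, hσ⟩ := Cardinal.extend_function_of_lt f hlt ⟨Equiv.refl α⟩
  refine ⟨σ, fun i hi => (hσ ⟨q i, mem_image_of_mem q hi⟩).trans ?_⟩
  exact (h _ (hidx _) _ hi).mp (hqidx _)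

theorem Set.Finite.exists_injOn_of_fiberwise_encard_le {α β κ : Type*} [Nonempty β]
    {T : Set α} (hT : T.Finite) {U : Set β} (f : α → κ) (g : β → κ)
    (h : ∀ i, {t ∈ T | f t = i}.encard ≤ {u ∈ U | g u = i}.encard) :
    ∃ φ : α → β, InjOn φ T ∧ ∀ t ∈ T, φ t ∈ U ∧ g (φ t) = f t := by
  choose φ hφ hinj using fun i => (hT.subset (sep_subset T _)).exists_injOn_of_encard_le (h i)
  have hmaps : ∀ t ∈ T, φ (f t) t ∈ U ∧ g (φ (f t) t) = f t := fun t ht => hφ (f t) ⟨ht, rfl⟩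
  refine ⟨fun t => φ (f t) t, fun t ht t' ht' htt' => ?_, hmaps⟩
  have hf : f t = f t' := by
    simp only at htt'
    rw [← (hmaps t ht).2, ← (hmaps t' ht').2, htt']
  exact hinj (f t) ⟨ht, rfl⟩ ⟨ht', hf.symm⟩ (by simpa [hf] using htt')

theorem exists_orbitOf_injOn_of_cycleCount_le {γ ρ : Perm ℕ}
    (hcount : ∀ n : ℕ, 1 ≤ n → cycleCount γ n ≤ cycleCount ρ n) {S : Set ℕ} (hS : S.Finite)
    (hinj : S.InjOn (orbitOf γ)) (hfin : ∀ b ∈ S, (orbitOf γ b).Finite) :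
    ∃ β : ℕ → ℕ, S.InjOn (orbitOf ρ ∘ β) ∧
      ∀ b ∈ S, (orbitOf ρ (β b)).encard = (orbitOf γ b).encard := by
  have hfiber : ∀ ι : ℕ∞, {t ∈ orbitOf γ '' S | t.encard = ι}.encard ≤ cycleCount ρ ι := by
    intro ι
    obtain hempty | ⟨_, ⟨b, hb, rfl⟩, rfl⟩ :=
      eq_empty_or_nonempty {t ∈ orbitOf γ '' S | t.encard = ι}
    · rw [hempty, encard_empty]
      exact zero_le
    · have hpos : 0 < (orbitOf γ b).ncard := (ncard_pos (hfin b hb)).mpr ⟨b, SameCycle.refl γ b⟩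
      rw [← (hfin b hb).cast_ncard_eq]
      refine le_trans (encard_le_encard ?_) (hcount _ hpos)
      rintro _ ⟨⟨b', -, rfl⟩, hb'⟩
      exact ⟨⟨b', rfl⟩, hb'⟩
  obtain ⟨φ, hφinj, hφ⟩ :=
    (hS.image (orbitOf γ)).exists_injOn_of_fiberwise_encard_le encard encard hfiber
  have hβ : ∀ b ∈ S, orbitOf ρ (invFun (orbitOf ρ) (φ (orbitOf γ b))) = φ (orbitOf γ b) :=
    fun b hb => invFun_eq (hφ _ (mem_image_of_mem _ hb)).1
  refine ⟨fun b => invFun (orbitOf ρ) (φ (orbitOf γ b)), fun b hb b' hb' hbb' => ?_,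
    fun b hb => (hβ b hb).symm ▸ (hφ _ (mem_image_of_mem _ hb)).2⟩
  simp only [comp_apply, hβ b hb, hβ b' hb'] at hbb'
  exact hinj hb hb' (hφinj (mem_image_of_mem _ hb) (mem_image_of_mem _ hb') hbb')

theorem exists_segment_cover (π : Perm ℕ) {E : Set ℕ} (hE : E.Finite) :
    ∃ B : Set ℕ, B.Finite ∧ B.InjOn (orbitOf π) ∧
      ∃ K : ℕ, ∀ x ∈ E, ∃ b ∈ B, ∃ k < K, (π ^ k) b = x := by
  -- `sInf` picks a canonical point of each cycle; shifting it back by `M` makes all exponents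
  -- needed to reach `E` nonnegative
  have hrep : ∀ x, sInf (orbitOf π x) ∈ orbitOf π x := fun x => Nat.sInf_mem ⟨x, SameCycle.refl π x⟩
  choose j hj using fun x => SameCycle.symm (hrep x)
  obtain ⟨M, hM⟩ := (hE.image fun x => (j x).natAbs).bddAbove
  let base x := (π ^ (-(M : ℤ))) (sInf (orbitOf π x))
  have horbit : ∀ x, orbitOf π (base x) = orbitOf π x := fun x =>
    (orbitOf_zpow_apply _ _ _).trans (orbitOf_eq_orbitOf_iff.mpr (hrep x)).symm
  refine ⟨base '' E, hE.image base, ?_, 2 * M + 1, fun x hx => ⟨base x, mem_image_of_mem _ hx, ?_⟩⟩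
  · rintro _ ⟨x, -, rfl⟩ _ ⟨x', -, rfl⟩ hxx'
    simp only [base]
    rw [← horbit x, ← horbit x', hxx']
  · have hjM := hM (mem_image_of_mem _ hx)
    refine ⟨(j x + M).toNat, by omega, ?_⟩
    rw [← zpow_natCast, Int.toNat_of_nonneg (by omega), ← mul_apply, ← zpow_add]
    simpa using hj x

theorem exists_segment_targets {γ ρ : Perm ℕ} (h : ∀ n : ℕ, ∃ s ∈ cyclesOf ρ, (n : ℕ∞) < s.encard)
    (hcount : ∀ n : ℕ, 1 ≤ n → cycleCount γ n ≤ cycleCount ρ n) {B : Set ℕ} (hB : B.Finite)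
    (hBinj : B.InjOn (orbitOf γ)) (K : ℕ) :
    ∃ β : ℕ → ℕ, ∀ b ∈ B, ∀ b' ∈ B, ∀ k < K, ∀ k' < K,
      (ρ ^ k) (β b) = (ρ ^ k') (β b') ↔ (γ ^ k) b = (γ ^ k') b' := by
  classical
  set S := {b ∈ B | (orbitOf γ b).encard < K}
  have hSB : S ⊆ B := sep_subset _ _
  obtain ⟨βs, hβs_inj, hβs⟩ := exists_orbitOf_injOn_of_cycleCount_le hcount (hB.subset hSB)
    (hBinj.mono hSB) fun b hb => encard_lt_top_iff.mp (hb.2.trans (ENat.natCast_lt_top K))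
  -- the segment of a long `b` is placed at offset `K * b` of a single long `ρ`-cycle
  obtain ⟨N, hN⟩ := hB.bddAbove
  have hBN : ∀ b ∈ B, b < N + 1 := fun b hb => Nat.lt_succ_of_le (hN hb)
  obtain ⟨_, ⟨β₀, rfl⟩, hβ₀⟩ := h (K * (N + 1))
  have hshort : ∀ b ∈ S, (orbitOf ρ (βs b)).encard ≠ (orbitOf ρ β₀).encard := fun b hb heq => by
    have : ((K * (N + 1) : ℕ) : ℕ∞) < K := hβ₀.trans (heq ▸ hβs b hb ▸ hb.2)
    exact (Nat.le_mul_of_pos_right K N.succ_pos).not_gt (by exact_mod_cast this)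
  set β := fun b => if b ∈ S then βs b else (ρ ^ (K * b)) β₀ with hβ
  have hsame : ∀ b ∈ B, ∀ k < K, ∀ k' < K,
      (ρ ^ k) (β b) = (ρ ^ k') (β b) ↔ (γ ^ k) b = (γ ^ k') b := by
    intro b hb k hk k' hk'
    by_cases hbS : b ∈ S
    · simp only [hβ, if_pos hbS]
      exact pow_apply_eq_pow_apply_iff_of_encard_eq (hβs b hbS) k k'
    · have hγ_inj := (injOn_pow_apply_Iio_iff K).mpr (not_lt.mp fun h => hbS ⟨hb, h⟩)
      simp only [hβ, if_neg hbS, ← mul_apply, ← pow_add]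
      rw [hγ_inj.eq_iff hk hk', pow_add_mul_apply_eq_iff hβ₀.le hk hk' (hBN b hb) (hBN b hb)]
      exact and_iff_left rfl
  have hsep : ∀ b ∈ B, ∀ b' ∈ B, ∀ k < K, ∀ k' < K, (ρ ^ k) (β b) = (ρ ^ k') (β b') → b = b' := by
    intro b hb b' hb' k hk k' hk' heq
    by_cases hbS : b ∈ S <;> by_cases hb'S : b' ∈ S <;>
      simp only [hβ, hbS, hb'S, if_true, if_false, ← mul_apply, ← pow_add] at heq
    · exact hβs_inj hbS hb'S (orbitOf_eq_of_pow_apply_eq heq)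
    · exact (hshort b hbS (congrArg encard (orbitOf_eq_of_pow_apply_eq heq))).elim
    · exact (hshort b' hb'S (congrArg encard (orbitOf_eq_of_pow_apply_eq heq.symm))).elim
    · exact ((pow_add_mul_apply_eq_iff hβ₀.le hk hk' (hBN b hb) (hBN b' hb')).mp heq).2
  refine ⟨β, fun b hb b' hb' k hk k' hk' => ⟨fun heq => ?_, fun heq => ?_⟩⟩
  · obtain rfl := hsep b hb b' hb' k hk k' hk' heq
    exact (hsame b hb k hk k' hk').mp heq
  · obtain rfl := hBinj hb hb' (orbitOf_eq_of_pow_apply_eq heq)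
    exact (hsame b hb k hk k' hk').mpr heq

theorem exists_conj_apply_eq_of_segments {γ ρ : Perm ℕ} {B : Set ℕ} (hB : B.Finite) {K : ℕ}
    {β : ℕ → ℕ} (h : ∀ b ∈ B, ∀ b' ∈ B, ∀ k < K, ∀ k' < K,
      (ρ ^ k) (β b) = (ρ ^ k') (β b') ↔ (γ ^ k) b = (γ ^ k') b') :
    ∃ σ : Perm ℕ, ∀ b ∈ B, ∀ k, k + 1 < K → (σ * ρ * σ⁻¹) ((γ ^ k) b) = γ ((γ ^ k) b) := by
  obtain ⟨σ, hσ⟩ := exists_perm_apply_eq_of_iff (hB.prod (finite_Iio K))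
    (p := fun i => (γ ^ i.2) i.1) (q := fun i => (ρ ^ i.2) (β i.1))
    (fun i hi j hj => h _ hi.1 _ hj.1 _ hi.2 _ hj.2)
  refine ⟨σ, fun b hb k hk => ?_⟩
  have hσ' : ∀ k < K, σ⁻¹ ((γ ^ k) b) = (ρ ^ k) (β b) := fun k hk =>
    Perm.inv_eq_iff_eq.mpr (hσ (b, k) ⟨hb, hk⟩).symm
  rw [mul_apply, mul_apply, hσ' k (by omega), ← mul_apply ρ, ← pow_succ', ← mul_apply γ,
    ← pow_succ', ← hσ' (k + 1) hk]
  exact σ.apply_symm_apply _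

theorem exists_conj_eqOn_of_cycleCount_le {ρ γ : Perm ℕ}
    (h : ∀ n : ℕ, ∃ s ∈ cyclesOf ρ, (n : ℕ∞) < s.encard)
    (hcount : ∀ n : ℕ, 1 ≤ n → cycleCount γ n ≤ cycleCount ρ n) {E : Set ℕ} (hE : E.Finite) :
    ∃ σ : Perm ℕ, EqOn (σ * ρ * σ⁻¹) γ E := by
  obtain ⟨B, hB, hBinj, K, hEB⟩ := exists_segment_cover γ hE
  obtain ⟨β, hβ⟩ := exists_segment_targets h hcount hB hBinj (K + 1)
  obtain ⟨σ, hσ⟩ := exists_conj_apply_eq_of_segments hB hβ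
  refine ⟨σ, fun x hx => ?_⟩
  obtain ⟨b, hb, k, hk, rfl⟩ := hEB x hx
  exact hσ b hb k (by omega)

/-- if the lengths of the cycles of `ρ` are unbounded, then `γ` lies in
the closure of the conjugacy class of `ρ` iff for every finite `n ≥ 1` the number of
`n`-cycles of `γ` is at most the number of `n`-cycles of `ρ`. -/
theorem stmt3 (ρ : Equiv.Perm ℕ)
    (h : ∀ n : ℕ, ∃ s ∈ cyclesOf ρ, (n : ℕ∞) < s.encard) (γ : Equiv.Perm ℕ) :
    γ ∈ closure {g : Equiv.Perm ℕ | IsConj ρ g} ↔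
      ∀ n : ℕ, 1 ≤ n → cycleCount γ (n : ℕ∞) ≤ cycleCount ρ (n : ℕ∞) := by
  refine ⟨fun hγ n _ => cycleCount_le_of_mem_closure hγ n, fun hcount => ?_⟩
  refine mem_closure_iff_forall_finite_eqOn.mpr fun F hF => ?_
  obtain ⟨σ, hσ⟩ := exists_conj_eqOn_of_cycleCount_le h hcount hF
  exact ⟨σ * ρ * σ⁻¹, isConj_iff.mpr ⟨σ, rfl⟩, hσ⟩
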